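/- Assume n + n' is odd and τ ≥ 0. Let Λ ∈ S_{n,δ} with Υ(Λ) = (μ;ν), μ = (μ_1 ≥ … ≥ μ_{m_1}), ν = (ν_1 ≥ … ≥ ν_{m_2}), and ν_1 ≥ 1, and for 0 ≤ k ≤ ν_1 represent θ_k(Λ) by the unitary-type symbol whose first row has m_2 entries and whose second row has m_1 + 1 entries. Then for each 0 ≤ k < ν_1 there are an entry α_k of the first row and an entry β_k of the second row of θ_k(Λ) such that, as multisets, the first row of θ_{k+1}(Λ) is obtained from that of θ_k(Λ) by replacing one occurrence of α_k by α_k − 2 and the second row is obtained by replacing one occurrence of β_k by β_k + 2. Moreover, all α_k have the same parity and α_0 > α_1 > … > α_{ν_1−1}; all β_k have the same parity and β_0 < β_1 < … < β_{ν_1−1}; and α_k and β_{k'} have opposite parities for all k, k'. -/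

import Mathlib

namespace PanUnitary

/-- `part μ i` : the `i`-th largest element (0-indexed) of the multiset `μ`, `0` beyond.
Viewing a multiset of naturals as a partition (identified up to trailing zeros),
this is the `(i+1)`-st part. -/
def part (μ : Multiset ℕ) (i : ℕ) : ℕ := ((μ.sort (· ≤ ·)).reverse).getD i 0

/-- Remove the zero parts: the canonical (zero-free) representative of a partition. -/
def strip (μ : Multiset ℕ) : Multiset ℕ := μ.filter (fun x => 0 < x)

/-- `transpose μ j` is the `(j+1)`-st part of the transposed (conjugate) partition. -/
def transpose (μ : Multiset ℕ) (j : ℕ) : ℕ := (μ.filter (fun x => j < x)).card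

/-- `Preceq f g` : the partition whose parts are given by `f` is `⪯` the one given by `g`,
i.e. `g i - 1 ≤ f i ≤ g i` for all `i`. -/
def Preceq (f g : ℕ → ℕ) : Prop := ∀ i, g i ≤ f i + 1 ∧ f i ≤ g i

/-- An integer `δ` is admissible if it is even and nonnegative, or odd and negative. -/
def IsAdmissible (δ : ℤ) : Prop := (Even δ ∧ 0 ≤ δ) ∨ (Odd δ ∧ δ < 0)

/-- `ε = 1` if `δ` is even, `ε = 0` if `δ` is odd. -/
def eps (δ : ℤ) : ℕ := if Even δ then 1 else 0

/-- `d (d + 1) / 2` where `d = |δ|`. -/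
def halfTri (δ : ℤ) : ℕ := δ.natAbs * (δ.natAbs + 1) / 2

/-- A symbol: a pair of rows of natural numbers (the strict-decrease condition is
part of the predicate `Symbol.IsUnitary`). -/
structure Symbol where
  A : List ℕ
  B : List ℕ

def Symbol.defect (Λ : Symbol) : ℤ := (Λ.A.length : ℤ) - (Λ.B.length : ℤ)

/-- The row `(a_1, …, a_m)` gives the partition with parts `(a_i - e)/2 - (m - i)`. -/
def upsRow (L : List ℕ) (e : ℕ) : Multiset ℕ :=
  ((L.mapIdx fun i a => (a - e) / 2 - (L.length - 1 - i) : List ℕ) : Multiset ℕ)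

/-- The bipartition `Υ(Λ)` (canonical zero-free representatives). -/
def Symbol.Upsilon (Λ : Symbol) : Multiset ℕ × Multiset ℕ :=
  (strip (upsRow Λ.A (eps Λ.defect)), strip (upsRow Λ.B (1 - eps Λ.defect)))

/-- `Λ` is a unitary-type symbol of (admissible) defect `δ`. -/
def Symbol.IsUnitary (Λ : Symbol) (δ : ℤ) : Prop :=
  Λ.A.Pairwise (· > ·) ∧ Λ.B.Pairwise (· > ·) ∧ Λ.defect = δ ∧
    (∀ a ∈ Λ.A, a % 2 = eps δ) ∧ (∀ b ∈ Λ.B, b % 2 = 1 - eps δ)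

/-- The rank `2(|μ| + |ν|) + d(d+1)/2` of a unitary-type symbol. -/
def Symbol.rank (Λ : Symbol) : ℕ :=
  2 * (Λ.Upsilon.1.sum + Λ.Upsilon.2.sum) + halfTri Λ.defect

/-- Equivalence of symbols: same defect and same `Υ`. -/
def Symbol.Equiv (Λ Λ' : Symbol) : Prop :=
  Λ.defect = Λ'.defect ∧ Λ.Upsilon = Λ'.Upsilon

/-- Membership in `S_{n,δ}`: a unitary-type symbol of admissible defect `δ` and rank `n`. -/
def InS (n : ℕ) (δ : ℤ) (Λ : Symbol) : Prop :=
  IsAdmissible δ ∧ Λ.IsUnitary δ ∧ Λ.rank = n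

/-- `Σ min(x,y)` over all unordered pairs of (positions of) entries of the list. -/
def pairMinSum : List ℕ → ℕ
  | [] => 0
  | x :: xs => (xs.map (fun y => min x y)).sum + pairMinSum xs

/-- All entries of a symbol (both rows). -/
def Symbol.entries (Λ : Symbol) : List ℕ := Λ.A ++ Λ.B

/-- `ord(Λ) = Σ min(x,y) − Σ_{i=1}^{⌊N/2⌋} (N − 2i)²`. -/
def Symbol.ord (Λ : Symbol) : ℤ :=
  (pairMinSum Λ.entries : ℤ) -
    ∑ i ∈ Finset.Icc 1 (Λ.entries.length / 2),
      ((Λ.entries.length : ℤ) - 2 * (i : ℤ)) ^ 2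

/-- The shift of a unitary-type symbol. -/
def Symbol.shift (Λ : Symbol) : Symbol :=
  ⟨Λ.A.map (fun a => a + 2) ++ [eps Λ.defect],
   Λ.B.map (fun b => b + 2) ++ [1 - eps Λ.defect]⟩

/-- The defect `δ'` for the second member of the dual pair. -/
def deltaPrime (n n' : ℕ) (δ : ℤ) : ℤ :=
  if Even (n + n') then (if δ = 0 then 0 else -δ + 1) else -δ - 1

/-- `τ = ((n' − d'(d'+1)/2) − (n − d(d+1)/2)) / 2`. -/
def tau (n n' : ℕ) (δ : ℤ) : ℚ :=
  (((n' : ℚ) - (halfTri (deltaPrime n n' δ) : ℚ)) - ((n : ℚ) - (halfTri δ : ℚ))) / 2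

/-- `τ` as a natural number (equal to `τ` whenever `τ` is a nonnegative integer). -/
def tauNat (n n' : ℕ) (δ : ℤ) : ℕ :=
  ((n' + halfTri δ) - (n + halfTri (deltaPrime n n' δ))) / 2

/-- The set of (canonical, zero-free) bipartitions `(μ;ν)` with
`2(|μ|+|ν|) + d(d+1)/2 = n`; equivalently `|μ|+|ν| = (n − d(d+1)/2)/2`. -/
def BipSet (n : ℕ) (δ : ℤ) : Set (Multiset ℕ × Multiset ℕ) :=
  {p | (∀ x ∈ p.1, 0 < x) ∧ (∀ x ∈ p.2, 0 < x) ∧ 2 * (p.1.sum + p.2.sum) + halfTri δ = n}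

/-- The `⪯`-conditions (on transposes) defining the relation `Θ`, at the level of
bipartitions `p = Υ(Λ)`, `q = Υ(Λ')`. -/
def PrecCond (n n' : ℕ) (p q : Multiset ℕ × Multiset ℕ) : Prop :=
  if Even (n + n') then
    Preceq (transpose p.2) (transpose q.1) ∧ Preceq (transpose q.2) (transpose p.1)
  else
    Preceq (transpose p.1) (transpose q.2) ∧ Preceq (transpose q.1) (transpose p.2)

/-- `Θ` at the level of bipartitions (classes of symbols). -/
def ThetaB (n n' : ℕ) (δ : ℤ) (p q : Multiset ℕ × Multiset ℕ) : Prop :=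
  q ∈ BipSet n' (deltaPrime n n' δ) ∧ PrecCond n n' p q

/-- `Λ' ∈ Θ(Λ)` for symbols, where `Λ ∈ S_{n,δ}`. -/
def InTheta (n n' : ℕ) (δ : ℤ) (Λ Λ' : Symbol) : Prop :=
  InS n' (deltaPrime n n' δ) Λ' ∧ PrecCond n n' Λ.Upsilon Λ'.Upsilon

/-- `Λ' ∈ Θ(Λ)_k`. -/
def InThetaK (n n' : ℕ) (δ : ℤ) (k : ℕ) (Λ Λ' : Symbol) : Prop :=
  InTheta n n' δ Λ Λ' ∧
    (if Even (n + n') then (Λ'.Upsilon.2.sum : ℤ) = (Λ.Upsilon.1.sum : ℤ) - (k : ℤ)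
     else (Λ'.Upsilon.1.sum : ℤ) = (Λ.Upsilon.2.sum : ℤ) - (k : ℤ))

/-- Remove (one copy of) the largest part. -/
def mtail (μ : Multiset ℕ) : Multiset ℕ := μ.erase (part μ 0)

/-- `θ_k` at the level of bipartitions:
even case: `(μ;ν) ↦ (sort(ν, τ+k); sort(μ_2, …, μ_{m_1}, μ_1 − k))`;
odd case: `(μ;ν) ↦ (sort(ν_2, …, ν_{m_2}, ν_1 − k); sort(μ, τ+k))`. -/
def thetaBip (n n' : ℕ) (δ : ℤ) (k : ℕ) (p : Multiset ℕ × Multiset ℕ) :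
    Multiset ℕ × Multiset ℕ :=
  if Even (n + n') then
    (strip ((tauNat n n' δ + k) ::ₘ p.2), strip ((part p.1 0 - k) ::ₘ mtail p.1))
  else
    (strip ((part p.2 0 - k) ::ₘ mtail p.2), strip ((tauNat n n' δ + k) ::ₘ p.1))

/-- The unitary-type symbol of defect `δ` with `Υ = p`, whose first row has `m1`
entries and second row `m2` entries (valid whenever `m1, m2` are large enough). -/
def symbolOfBip (δ : ℤ) (p : Multiset ℕ × Multiset ℕ) (m1 m2 : ℕ) : Symbol :=
  ⟨List.ofFn (fun i : Fin m1 => 2 * (part p.1 (i : ℕ) + (m1 - 1 - (i : ℕ))) + eps δ),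
   List.ofFn (fun j : Fin m2 => 2 * (part p.2 (j : ℕ) + (m2 - 1 - (j : ℕ))) + (1 - eps δ))⟩

/-- A canonical representative symbol of defect `δ` with `Υ = p`. -/
def canonicalSymbol (δ : ℤ) (p : Multiset ℕ × Multiset ℕ) : Symbol :=
  symbolOfBip δ p (max p.1.card ((p.2.card : ℤ) + δ).toNat)
    (((max p.1.card ((p.2.card : ℤ) + δ).toNat : ℤ) - δ).toNat)

/-- A symbol representing the class `θ_k(Λ)`. -/
def thetaSymbol (n n' : ℕ) (δ : ℤ) (k : ℕ) (Λ : Symbol) : Symbol :=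
  canonicalSymbol (deltaPrime n n' δ) (thetaBip n n' δ k Λ.Upsilon)

/-- `K(Λ)`: `μ_1` in the even case, `ν_1` in the odd case. -/
def bigK (n n' : ℕ) (Λ : Symbol) : ℕ :=
  if Even (n + n') then part Λ.Upsilon.1 0 else part Λ.Upsilon.2 0

/-- `ord` at the level of bipartitions (well defined on classes). -/
def ordB (δ : ℤ) (p : Multiset ℕ × Multiset ℕ) : ℤ := (canonicalSymbol δ p).ord

/-- Strict lexicographic order on partitions. -/
def PartLexLt (μ ν : Multiset ℕ) : Prop :=
  ∃ i, (∀ j < i, part μ j = part ν j) ∧ part μ i < part ν i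

/-- The total order on `S_{n,δ}` (and on `S_{n',δ'}`), at the level of bipartitions;
it depends only on the parity of `n + n'`. -/
def BLt (n n' : ℕ) (p q : Multiset ℕ × Multiset ℕ) : Prop :=
  if Even (n + n') then
    p.1.sum < q.1.sum ∨ (p.1.sum = q.1.sum ∧ PartLexLt p.1 q.1) ∨
      (p.1 = q.1 ∧ PartLexLt p.2 q.2)
  else
    p.2.sum < q.2.sum ∨ (p.2.sum = q.2.sum ∧ PartLexLt p.2 q.2) ∨
      (p.2 = q.2 ∧ PartLexLt p.1 q.1)

/-- `q ∈ Θ♭(p)` relative to a given partial function `bar` (playing the role of `θ̄`). -/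
def InFlat (n n' : ℕ) (δ : ℤ)
    (bar : Multiset ℕ × Multiset ℕ → Option (Multiset ℕ × Multiset ℕ))
    (p q : Multiset ℕ × Multiset ℕ) : Prop :=
  ThetaB n n' δ p q ∧ ∀ r ∈ BipSet n δ, BLt n n' r p → bar r ≠ some q

/-- `bar` is the partial function `θ̄` defined by recursion along the total order:
on each `p ∈ S_{n,δ}`, if `Θ♭(p) ≠ ∅` then `bar p` is defined and is the smallest
element (w.r.t. the total order) of maximal `ord` in `Θ♭(p)`. -/
def IsThetaBar (n n' : ℕ) (δ : ℤ)
    (bar : Multiset ℕ × Multiset ℕ → Option (Multiset ℕ × Multiset ℕ)) : Prop :=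
  (∀ p, p ∉ BipSet n δ → bar p = none) ∧
  ∀ p ∈ BipSet n δ,
    ((∃ q, InFlat n n' δ bar p q) → ∃ q, bar p = some q) ∧
    ∀ q, bar p = some q →
      InFlat n n' δ bar p q ∧
      (∀ r, InFlat n n' δ bar p r →
        ordB (deltaPrime n n' δ) r ≤ ordB (deltaPrime n n' δ) q) ∧
      (∀ r, InFlat n n' δ bar p r →
        ordB (deltaPrime n n' δ) r = ordB (deltaPrime n n' δ) q → r ≠ q → BLt n n' q r)

/-! A partition and its transpose form a Galois connection, `t < μ_i ↔ i < (μ^T)_t`. Hence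
raising one part `w` of `w ::ₘ s` to `w + 1` changes the sorted sequence only at the index
`(s^T)_w`, and in the symbol row `(2 (μ_i + m - 1 - i) + ε)_i` exactly one entry moves up by `2`.
From `θ_k` to `θ_{k+1}` the part `ν_1 - k` of the first partition drops by one and the part
`τ + k` of the second rises by one, so `α_k` and `β_k` sit at the indices `(ν'^T)_{ν_1-k-1}` and
`(μ^T)_{τ+k}`, where `ν'` is `ν` without `ν_1`. Transposes are antitone, so these indices move
monotonically in `k`, which makes `α` strictly decreasing and `β` strictly increasing. -/

theorem lt_getD_iff_lt_countP_of_pairwise_ge {L : List ℕ} (hL : L.Pairwise (· ≥ ·)) (i t : ℕ) :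
    t < L.getD i 0 ↔ i < L.countP (fun x => t < x) := by
  induction L generalizing i with
  | nil => simp
  | cons x xs ih =>
    obtain ⟨hx, hxs⟩ := List.pairwise_cons.1 hL
    by_cases htx : t < x
    · cases i with
      | zero => simp [htx]
      | succ j => rw [List.getD_cons_succ, ih hxs, List.countP_cons]; simp [htx]
    · have hzero : xs.countP (fun y => t < y) = 0 :=
        List.countP_eq_zero.2 fun y hy => by have := hx y hy; simp; omega
      cases i with
      | zero => rw [List.getD_cons_zero, List.countP_cons, hzero]; simp [htx]
      | succ j => rw [List.getD_cons_succ, ih hxs, List.countP_cons]; simp [htx, hzero]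

lemma part_lt_iff (μ : Multiset ℕ) (i t : ℕ) : t < part μ i ↔ i < transpose μ t := by
  have hsorted : ((μ.sort (· ≤ ·)).reverse).Pairwise (· ≥ ·) :=
    List.pairwise_reverse.2 (Multiset.pairwise_sort μ _)
  rw [part, lt_getD_iff_lt_countP_of_pairwise_ge hsorted, List.countP_reverse, transpose,
    ← Multiset.countP_eq_card_filter, ← Multiset.coe_countP, Multiset.sort_eq]

lemma part_eq_of_transpose_iff {μ μ' : Multiset ℕ} {i : ℕ}
    (h : ∀ t, i < transpose μ t ↔ i < transpose μ' t) : part μ i = part μ' i :=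
  eq_of_forall_lt_iff fun t => by rw [part_lt_iff, part_lt_iff, h]

lemma transpose_strip (μ : Multiset ℕ) (t : ℕ) : transpose (strip μ) t = transpose μ t := by
  rw [transpose, strip, Multiset.filter_filter]
  congr 1
  exact Multiset.filter_congr fun x _ => ⟨And.left, fun h => ⟨h, by omega⟩⟩

lemma part_strip (μ : Multiset ℕ) (i : ℕ) : part (strip μ) i = part μ i :=
  part_eq_of_transpose_iff fun t => by rw [transpose_strip]

lemma transpose_cons (a : ℕ) (s : Multiset ℕ) (t : ℕ) :
    transpose (a ::ₘ s) t = transpose s t + if t < a then 1 else 0 := by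
  rw [transpose, Multiset.filter_cons]
  split <;> simp [transpose]

lemma transpose_antitone (s : Multiset ℕ) : Antitone (transpose s) := fun _ _ h =>
  Multiset.card_le_card (Multiset.monotone_filter_right s fun _ hb => by omega)

lemma transpose_le_card (s : Multiset ℕ) (t : ℕ) : transpose s t ≤ Multiset.card s :=
  Multiset.card_le_card (Multiset.filter_le _ s)

lemma part_mem {μ : Multiset ℕ} {i : ℕ} (h : 0 < part μ i) : part μ i ∈ μ := by
  rw [part, List.getD_eq_getElem?_getD] at h ⊢
  cases hget : ((μ.sort (· ≤ ·)).reverse)[i]? with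
  | none => simp [hget] at h
  | some x =>
    simpa using Multiset.mem_sort (· ≤ ·) |>.1 (List.mem_reverse.1 (List.mem_of_getElem? hget))

lemma card_mtail {ν : Multiset ℕ} (h : 0 < part ν 0) :
    Multiset.card (mtail ν) = Multiset.card ν - 1 :=
  Multiset.card_erase_of_mem (part_mem h)

lemma transpose_mtail_lt {ν : Multiset ℕ} {m : ℕ} (hν : 0 < part ν 0)
    (hm : Multiset.card ν ≤ m) (t : ℕ) : transpose (mtail ν) t < m := by
  have hpos : 0 < Multiset.card ν := Multiset.card_pos_iff_exists_mem.2 ⟨_, part_mem hν⟩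
  have := transpose_le_card (mtail ν) t
  rw [card_mtail hν] at this
  omega

section RaiseOnePart

variable (s : Multiset ℕ) (w : ℕ)

lemma part_cons_transpose : part (w ::ₘ s) (transpose s w) = w := by
  refine le_antisymm (not_lt.1 fun hlt => ?_) (not_lt.1 fun hlt => ?_)
  · have := (part_lt_iff _ _ _).1 hlt
    simp [transpose_cons] at this
  · have hanti := transpose_antitone s (Nat.sub_le w 1)
    have := (part_lt_iff (w ::ₘ s) (transpose s w) (w - 1)).2
      (by rw [transpose_cons, if_pos (by omega)]; omega)
    omega

lemma part_succ_cons_transpose : part ((w + 1) ::ₘ s) (transpose s w) = w + 1 := by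
  refine le_antisymm (not_lt.1 fun hlt => ?_) (not_lt.1 fun hlt => ?_)
  · have := (part_lt_iff _ _ _).1 hlt
    rw [transpose_cons, if_neg (lt_irrefl _)] at this
    have := transpose_antitone s (Nat.le_add_right w 1)
    omega
  · have := (part_lt_iff ((w + 1) ::ₘ s) (transpose s w) w).2
      (by rw [transpose_cons, if_pos (by omega)]; omega)
    omega

lemma part_succ_cons_of_ne {j : ℕ} (hj : j ≠ transpose s w) :
    part ((w + 1) ::ₘ s) j = part (w ::ₘ s) j := by
  refine part_eq_of_transpose_iff fun t => ?_
  rw [transpose_cons, transpose_cons]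
  rcases lt_trichotomy t w with ht | rfl | ht
  · simp [ht, ht.trans (Nat.lt_succ_self w)]
  · simp only [lt_add_one, lt_irrefl, if_true, if_false]
    omega
  · simp [ht.not_gt, (Nat.succ_le_of_lt ht).not_gt]

end RaiseOnePart

def row (μ : Multiset ℕ) (m e : ℕ) : List ℕ :=
  List.ofFn fun i : Fin m => 2 * (part μ i + (m - 1 - i)) + e

lemma coe_ofFn_eq_cons_erase {α : Type*} [DecidableEq α] {m : ℕ} {f g : Fin m → α}
    (i₀ : Fin m) (h : ∀ i, i ≠ i₀ → g i = f i) :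
    (List.ofFn g : Multiset α) = g i₀ ::ₘ (List.ofFn f : Multiset α).erase (f i₀) := by
  have hcoe (u : Fin m → α) :
      (List.ofFn u : Multiset α) = u i₀ ::ₘ (Finset.univ.val.erase i₀).map u := by
    rw [← Fin.univ_val_map, ← Multiset.map_cons, Multiset.cons_erase (Finset.mem_univ i₀)]
  rw [hcoe g, hcoe f, Multiset.erase_cons_head,
    Multiset.map_congr rfl fun i hi => h i (Finset.univ.nodup.mem_erase_iff.1 hi).1]

lemma mem_row (μ : Multiset ℕ) {m : ℕ} (e : ℕ) (i : Fin m) :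
    2 * (part μ i + (m - 1 - i)) + e ∈ row μ m e :=
  List.mem_ofFn.2 ⟨i, rfl⟩

lemma coe_row_eq_cons_erase {μ μ' : Multiset ℕ} {m : ℕ} (e : ℕ) (i₀ : Fin m)
    (h : ∀ i : ℕ, i ≠ i₀ → part μ' i = part μ i) :
    (row μ' m e : Multiset ℕ) = (2 * (part μ' i₀ + (m - 1 - i₀)) + e) ::ₘ
      (row μ m e : Multiset ℕ).erase (2 * (part μ i₀ + (m - 1 - i₀)) + e) :=
  coe_ofFn_eq_cons_erase i₀ fun i hi => by rw [h i (Fin.val_ne_of_ne hi)]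

section RaiseOnePartInRow

variable (s : Multiset ℕ) (w : ℕ) {m : ℕ} (e : ℕ) (hm : transpose s w < m)
include hm

lemma mem_row_cons : 2 * (w + (m - 1 - transpose s w)) + e ∈ row (w ::ₘ s) m e := by
  simpa only [part_cons_transpose] using mem_row (w ::ₘ s) e ⟨_, hm⟩

lemma mem_row_succ_cons :
    2 * (w + 1 + (m - 1 - transpose s w)) + e ∈ row ((w + 1) ::ₘ s) m e := by
  simpa only [part_succ_cons_transpose] using mem_row ((w + 1) ::ₘ s) e ⟨_, hm⟩

lemma coe_row_succ_cons :
    (row ((w + 1) ::ₘ s) m e : Multiset ℕ) = (2 * (w + 1 + (m - 1 - transpose s w)) + e) ::ₘ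
      (row (w ::ₘ s) m e : Multiset ℕ).erase (2 * (w + (m - 1 - transpose s w)) + e) := by
  simpa only [part_cons_transpose, part_succ_cons_transpose] using
    coe_row_eq_cons_erase e ⟨_, hm⟩ fun i hi => part_succ_cons_of_ne s w hi

lemma coe_row_cons_of_succ :
    (row (w ::ₘ s) m e : Multiset ℕ) = (2 * (w + (m - 1 - transpose s w)) + e) ::ₘ
      (row ((w + 1) ::ₘ s) m e : Multiset ℕ).erase (2 * (w + 1 + (m - 1 - transpose s w)) + e) := by
  simpa only [part_cons_transpose, part_succ_cons_transpose] using
    coe_row_eq_cons_erase e ⟨_, hm⟩ fun i hi => (part_succ_cons_of_ne s w hi).symm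

end RaiseOnePartInRow

lemma eps_le_one (δ : ℤ) : eps δ ≤ 1 := by
  unfold eps
  split <;> omega

lemma symbolOfBip_thetaBip_of_not_even {n n' : ℕ} (hpar : ¬ Even (n + n')) (δ δ' : ℤ) (k : ℕ)
    (p : Multiset ℕ × Multiset ℕ) (m m' : ℕ) :
    symbolOfBip δ' (thetaBip n n' δ k p) m m' =
      ⟨row ((part p.2 0 - k) ::ₘ mtail p.2) m (eps δ'),
        row ((tauNat n n' δ + k) ::ₘ p.1) m' (1 - eps δ')⟩ := by
  simp only [symbolOfBip, thetaBip, if_neg hpar, row, part_strip]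

theorem statement8_general (n n' : ℕ) (δ : ℤ) (hpar : ¬ Even (n + n'))
    (Λ : Symbol) (hν : 1 ≤ part Λ.Upsilon.2 0) (m1 m2 : ℕ)
    (hm1 : Λ.Upsilon.1.card ≤ m1) (hm2 : Λ.Upsilon.2.card ≤ m2)
    (T : ℕ → Symbol)
    (hT : T = fun k => symbolOfBip (deltaPrime n n' δ) (thetaBip n n' δ k Λ.Upsilon)
      m2 (m1 + 1)) :
    ∃ α β : ℕ → ℕ,
      (∀ k, k < part Λ.Upsilon.2 0 →
        α k ∈ (T k).A ∧ β k ∈ (T k).B ∧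
        ((T (k + 1)).A : Multiset ℕ) = (α k - 2) ::ₘ (((T k).A : Multiset ℕ).erase (α k)) ∧
        ((T (k + 1)).B : Multiset ℕ) = (β k + 2) ::ₘ (((T k).B : Multiset ℕ).erase (β k))) ∧
      (∀ k, k < part Λ.Upsilon.2 0 → ∀ k', k' < part Λ.Upsilon.2 0 → α k % 2 = α k' % 2) ∧
      (∀ k k', k < k' → k' < part Λ.Upsilon.2 0 → α k' < α k) ∧
      (∀ k, k < part Λ.Upsilon.2 0 → ∀ k', k' < part Λ.Upsilon.2 0 → β k % 2 = β k' % 2) ∧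
      (∀ k k', k < k' → k' < part Λ.Upsilon.2 0 → β k < β k') ∧
      (∀ k, k < part Λ.Upsilon.2 0 → ∀ k', k' < part Λ.Upsilon.2 0 → α k % 2 ≠ β k' % 2) := by
  set ν₁ := part Λ.Upsilon.2 0
  set μ := Λ.Upsilon.1
  set s := mtail Λ.Upsilon.2
  set τ := tauNat n n' δ
  set e := eps (deltaPrime n n' δ)
  have he : e ≤ 1 := eps_le_one _
  have hs : ∀ w, transpose s w < m2 := transpose_mtail_lt hν hm2
  have hμ : ∀ w, transpose μ w < m1 + 1 := fun w =>
    Nat.lt_succ_of_le ((transpose_le_card μ w).trans hm1)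
  have hT' : ∀ k, T k = ⟨row ((ν₁ - k) ::ₘ s) m2 e, row ((τ + k) ::ₘ μ) (m1 + 1) (1 - e)⟩ :=
    fun k => hT ▸ symbolOfBip_thetaBip_of_not_even hpar _ _ k _ _ _
  obtain ⟨α, hα⟩ : ∃ α : ℕ → ℕ,
      ∀ k, α k = 2 * (ν₁ - k + (m2 - 1 - transpose s (ν₁ - k - 1))) + e := ⟨_, fun _ => rfl⟩
  obtain ⟨β, hβ⟩ : ∃ β : ℕ → ℕ,
      ∀ k, β k = 2 * (τ + k + (m1 + 1 - 1 - transpose μ (τ + k))) + (1 - e) := ⟨_, fun _ => rfl⟩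
  refine ⟨α, β, fun k hk => ?_, fun k _ k' _ => ?_, fun k k' hkk' hk' => ?_,
    fun k _ k' _ => ?_, fun k k' hkk' _ => ?_, fun k _ k' _ => ?_⟩
  · obtain ⟨w, hw⟩ : ∃ w, ν₁ - k = w + 1 := ⟨ν₁ - k - 1, by omega⟩
    have hαk : α k = 2 * (w + 1 + (m2 - 1 - transpose s w)) + e := by
      rw [hα, hw, add_tsub_cancel_right]
    have hαk' : α k - 2 = 2 * (w + (m2 - 1 - transpose s w)) + e := by omega
    have hβk : β k + 2 = 2 * (τ + k + 1 + (m1 + 1 - 1 - transpose μ (τ + k))) + (1 - e) := by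
      rw [hβ]; omega
    rw [hT', hT', hαk', hβk, hαk, hβ, hw, show ν₁ - (k + 1) = w by omega, ← add_assoc]
    exact ⟨mem_row_succ_cons s w e (hs w), mem_row_cons μ (τ + k) (1 - e) (hμ _),
      coe_row_cons_of_succ s w e (hs w), coe_row_succ_cons μ (τ + k) (1 - e) (hμ _)⟩
  · rw [hα, hα]; omega
  · have := transpose_antitone s (show ν₁ - k' - 1 ≤ ν₁ - k - 1 by omega)
    have := hs (ν₁ - k' - 1)
    rw [hα, hα]; omega
  · rw [hβ, hβ]; omega
  · have := transpose_antitone μ (show τ + k ≤ τ + k' by omega)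
    have := hμ (τ + k)
    rw [hβ, hβ]; omega
  · rw [hα, hβ]; omega

/-- The odd case: from `θ_k(Λ)` to `θ_{k+1}(Λ)` (represented with first row of `m₂`
entries and second row of `m₁ + 1` entries) a unique first-row entry `α_k` becomes
`α_k − 2` and a unique second-row entry `β_k` becomes `β_k + 2`; the `α_k` share a
parity and strictly decrease, the `β_k` share a parity and strictly increase, and
`α`'s and `β`'s have opposite parities. -/
theorem statement8 (n n' : ℕ) (δ : ℤ) (hpar : ¬ Even (n + n'))
    (hτ : 0 ≤ tau n n' δ) (Λ : Symbol) (hΛ : InS n δ Λ)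
    (hν : 1 ≤ part Λ.Upsilon.2 0) (m1 m2 : ℕ)
    (hm1 : Λ.Upsilon.1.card ≤ m1) (hm2 : Λ.Upsilon.2.card ≤ m2)
    (hdef : (m2 : ℤ) - ((m1 : ℤ) + 1) = deltaPrime n n' δ)
    (T : ℕ → Symbol)
    (hT : T = fun k => symbolOfBip (deltaPrime n n' δ) (thetaBip n n' δ k Λ.Upsilon)
      m2 (m1 + 1)) :
    ∃ α β : ℕ → ℕ,
      (∀ k, k < part Λ.Upsilon.2 0 →
        α k ∈ (T k).A ∧ β k ∈ (T k).B ∧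
        ((T (k + 1)).A : Multiset ℕ) = (α k - 2) ::ₘ (((T k).A : Multiset ℕ).erase (α k)) ∧
        ((T (k + 1)).B : Multiset ℕ) = (β k + 2) ::ₘ (((T k).B : Multiset ℕ).erase (β k))) ∧
      (∀ k, k < part Λ.Upsilon.2 0 → ∀ k', k' < part Λ.Upsilon.2 0 → α k % 2 = α k' % 2) ∧
      (∀ k k', k < k' → k' < part Λ.Upsilon.2 0 → α k' < α k) ∧
      (∀ k, k < part Λ.Upsilon.2 0 → ∀ k', k' < part Λ.Upsilon.2 0 → β k % 2 = β k' % 2) ∧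
      (∀ k k', k < k' → k' < part Λ.Upsilon.2 0 → β k < β k') ∧
      (∀ k, k < part Λ.Upsilon.2 0 → ∀ k', k' < part Λ.Upsilon.2 0 → α k % 2 ≠ β k' % 2) :=
  statement8_general n n' δ hpar Λ hν m1 m2 hm1 hm2 T hT

end PanUnitary
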